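/- arXiv:1504.05499 — 2 statements merged into one kernel-verified Lean document; each statement's English description precedes it below -/
import Mathlib

section
/- Distribution formula: for every positive integer w, natural number m, real q with 0 < q < 1, and real x, β_{m,q}(w·x) = [w]_q^{m-1} · ∑_{k=0}^{w-1} q^k · β_{m,q^w}((x·w + k)/w · 1), i.e., β_{m,q}(wx) = [w]_q^{m-1} ∑_{k=0}^{w-1} q^k β_{m,q^w}(x + k/w). -/
/-- The real `q`-analogue `[z]_r = (1 - r^z)/(1 - r)` using real powers. -/
noncomputable def qReal (r z : ℝ) : ℝ := (1 - r ^ z) / (1 - r)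

/-- The Carlitz `q`-Bernoulli polynomial
`β_{n,q}(x) = ∑_{l=0}^n C(n,l) q^{lx} [x]_q^{n-l} β_l` (real `x`, real powers),
built from a sequence `β` of `q`-Bernoulli numbers. -/
noncomputable def qBernoulliPoly (q : ℝ) (β : ℕ → ℝ) (n : ℕ) (x : ℝ) : ℝ :=
  ∑ l ∈ Finset.range (n + 1), (n.choose l : ℝ) * q ^ ((l : ℝ) * x) * (qReal q x) ^ (n - l) * β l

/-- The Carlitz recurrence: `β 0 = 1` and
`q·∑_{k=0}^{n} C(n,k) q^k β k − β n = δ_{n,1}` for `n ≥ 1`. -/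
def IsCarlitz (q : ℝ) (β : ℕ → ℝ) : Prop :=
  β 0 = 1 ∧ ∀ n : ℕ, 1 ≤ n →
    q * ∑ k ∈ Finset.range (n + 1), (n.choose k : ℝ) * q ^ k * β k - β n =
      if n = 1 then 1 else 0

/-!
The Carlitz recurrence has exactly one solution for `0 < q < 1`, namely
`β_n = (1 - q)^{-n} ∑_i C(n,i) (-1)^i (i+1) / [i+1]_q`. Substituting it into the definition, the
binomial theorem collapses the polynomial to
`β_{m,q}(x) = (1 - q)^{-m} ∑_i C(m,i) (-1)^i (i+1) / [i+1]_q · q^{ix}`.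
In this form the distribution relation is a geometric sum: for each `i`, summing
`q^k (q^w)^{i(x + k/w)} = q^{iwx} (q^{i+1})^k` over `k < w` gives the factor `[w]_{q^{i+1}}`, and
`[w]_{q^{i+1}} / [i+1]_{q^w} = [w]_q / [i+1]_q`.
-/

open Finset

theorem sum_choose_mul_pow_mul_sum_choose {R : Type*} [CommSemiring R] (a b : R) (c : ℕ → R)
    (m : ℕ) :
    ∑ l ∈ range (m + 1), (m.choose l : R) * a ^ l * b ^ (m - l) *
        ∑ i ∈ range (l + 1), (l.choose i : R) * c i =
      ∑ i ∈ range (m + 1), (m.choose i : R) * c i * a ^ i * (a + b) ^ (m - i) := by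
  simp_rw [mul_sum]
  rw [sum_comm' (t' := range (m + 1)) (s' := fun i => Ico i (m + 1))
    (fun l i => by simp only [mem_range, mem_Ico]; omega)]
  refine sum_congr rfl fun i hi => ?_
  have him : i ≤ m := mem_range_succ_iff.mp hi
  rw [sum_Ico_eq_sum_range, add_pow, mul_sum, show m + 1 - i = m - i + 1 by omega]
  refine sum_congr rfl fun j hj => ?_
  have hj : j ≤ m - i := mem_range_succ_iff.mp hj
  have hchoose : (m.choose (i + j) : R) * ((i + j).choose i : R) =
      m.choose i * (m - i).choose j := by
    have := Nat.choose_mul (n := m) (Nat.le_add_right i j)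
    rw [Nat.add_sub_cancel_left] at this
    rw [← Nat.cast_mul, ← Nat.cast_mul, this]
  calc _ = (m.choose (i + j) * (i + j).choose i : R) *
          (c i * a ^ i * (a ^ j * b ^ (m - i - j))) := by
        rw [show m - (i + j) = m - i - j by omega, pow_add]; ring
    _ = _ := by rw [hchoose]; ring

section
variable {R : Type*} [CommRing R]

theorem sum_range_choose_mul_neg_one_pow (n : ℕ) :
    ∑ i ∈ range (n + 1), (n.choose i : R) * (-1) ^ i = if n = 0 then 1 else 0 := by
  simpa [mul_comm, zero_pow_eq] using (add_pow (-1 : R) 1 n).symm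

theorem sum_range_choose_mul_neg_one_pow_mul_succ {n : ℕ} (hn : n ≠ 0) :
    ∑ i ∈ range (n + 1), (n.choose i : R) * (-1) ^ i * (i + 1) = if n = 1 then -1 else 0 := by
  obtain ⟨n, rfl⟩ := Nat.exists_eq_add_one_of_ne_zero hn
  have hshift (j : ℕ) : ((n + 1).choose (j + 1) : R) * (-1) ^ (j + 1) * ((j + 1 : ℕ) : R) =
      -(n + 1) * ((n.choose j : R) * (-1) ^ j) := by
    have hchoose : ((n + 1).choose (j + 1) : R) * ((j + 1 : ℕ) : R) = (n + 1) * n.choose j := by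
      rw [← Nat.cast_mul, ← Nat.add_one_mul_choose_eq]; push_cast; rfl
    linear_combination (-1 : R) ^ (j + 1) * hchoose
  simp only [mul_add, mul_one, sum_add_distrib, sum_range_choose_mul_neg_one_pow, if_neg hn]
  rw [sum_range_succ', sum_congr rfl fun j _ => hshift j, ← mul_sum,
    sum_range_choose_mul_neg_one_pow]
  rcases eq_or_ne n 0 with rfl | hn0 <;> simp [*]
end

theorem pow_ne_one_of_nonneg {M₀ : Type*} [MonoidWithZero M₀] [LinearOrder M₀]
    [PosMulStrictMono M₀] [ZeroLEOneClass M₀] {a : M₀} (ha : 0 ≤ a) (ha1 : a ≠ 1) {n : ℕ}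
    (hn : n ≠ 0) : a ^ n ≠ 1 :=
  (pow_eq_one_iff_of_nonneg ha hn).not.mpr ha1

/-- `(-1)^i (i+1) / [i+1]_q`. -/
noncomputable def carlitzCoeff (q : ℝ) (i : ℕ) : ℝ :=
  (-1) ^ i * (i + 1) * (1 - q) / (1 - q ^ (i + 1))

noncomputable def carlitzSum (q : ℝ) (m : ℕ) (t : ℝ) : ℝ :=
  ∑ i ∈ range (m + 1), (m.choose i : ℝ) * carlitzCoeff q i * t ^ i

noncomputable def carlitzNum (q : ℝ) (n : ℕ) : ℝ :=
  carlitzSum q n 1 / (1 - q) ^ n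

section
variable {q : ℝ}

/-- With `a = q^x` the left side is `qBernoulliPoly q (carlitzNum q) m x`; with `a = q` it is the
sum in the Carlitz recurrence. -/
theorem sum_choose_pow_mul_carlitzNum (hq : q ≠ 1) (a : ℝ) (m : ℕ) :
    ∑ l ∈ range (m + 1), (m.choose l : ℝ) * a ^ l * ((1 - a) / (1 - q)) ^ (m - l) *
        carlitzNum q l = carlitzSum q m a / (1 - q) ^ m := by
  have hq' : 1 - q ≠ 0 := sub_ne_zero.mpr hq.symm
  set d := (1 - q)⁻¹
  have hd : a * d + (1 - a) / (1 - q) = d := by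
    simp only [d]; field_simp; ring
  calc _ = ∑ l ∈ range (m + 1), (m.choose l : ℝ) * (a * d) ^ l *
          ((1 - a) / (1 - q)) ^ (m - l) *
          ∑ i ∈ range (l + 1), (l.choose i : ℝ) * carlitzCoeff q i := by
        refine sum_congr rfl fun l _ => ?_
        simp only [carlitzNum, carlitzSum, one_pow, mul_one, div_eq_mul_inv, ← inv_pow, d]
        ring
    _ = ∑ i ∈ range (m + 1), (m.choose i : ℝ) * carlitzCoeff q i * a ^ i * d ^ m := by
        rw [sum_choose_mul_pow_mul_sum_choose, hd]
        refine sum_congr rfl fun i hi => ?_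
        rw [mul_pow, ← pow_sub_mul_pow d (mem_range_succ_iff.mp hi)]
        ring
    _ = _ := by simp only [carlitzSum, ← sum_mul, d, inv_pow, div_eq_mul_inv]

theorem qBernoulliPoly_carlitzNum (hq0 : 0 < q) (hq1 : q ≠ 1) (m : ℕ) (x : ℝ) :
    qBernoulliPoly q (carlitzNum q) m x = carlitzSum q m (q ^ x) / (1 - q) ^ m := by
  rw [← sum_choose_pow_mul_carlitzNum hq1, qBernoulliPoly]
  refine sum_congr rfl fun l _ => ?_
  rw [qReal, mul_comm (l : ℝ), Real.rpow_mul hq0.le, Real.rpow_natCast]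

theorem carlitzCoeff_mul_pow_sub_one {i : ℕ} (hq : q ^ (i + 1) ≠ 1) :
    carlitzCoeff q i * (q ^ (i + 1) - 1) = -((-1) ^ i * (i + 1) * (1 - q)) := by
  have : 1 - q ^ (i + 1) ≠ 0 := sub_ne_zero.mpr hq.symm
  rw [carlitzCoeff]
  field_simp
  ring

theorem isCarlitz_carlitzNum (hq0 : 0 ≤ q) (hq1 : q ≠ 1) : IsCarlitz q (carlitzNum q) := by
  have hq' : 1 - q ≠ 0 := sub_ne_zero.mpr hq1.symm
  refine ⟨by simp [carlitzNum, carlitzSum, carlitzCoeff, hq'], fun n hn => ?_⟩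
  have hsum : ∑ k ∈ range (n + 1), (n.choose k : ℝ) * q ^ k * carlitzNum q k =
      carlitzSum q n q / (1 - q) ^ n := by
    rw [← sum_choose_pow_mul_carlitzNum hq1]
    simp [div_self hq']
  have hdiff : q * carlitzSum q n q - carlitzSum q n 1 =
      -(1 - q) * ∑ i ∈ range (n + 1), (n.choose i : ℝ) * (-1) ^ i * (i + 1) := by
    simp only [carlitzSum, mul_sum, one_pow, mul_one, ← sum_sub_distrib]
    refine sum_congr rfl fun i _ => ?_
    linear_combination (n.choose i : ℝ) *
      carlitzCoeff_mul_pow_sub_one (pow_ne_one_of_nonneg hq0 hq1 i.succ_ne_zero)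
  rw [hsum, carlitzNum, mul_div_assoc', ← sub_div, hdiff,
    sum_range_choose_mul_neg_one_pow_mul_succ (by omega)]
  split_ifs with h1
  · subst h1; field_simp
  · simp

/-- The top coefficient of the recurrence is `q^(n+1) - 1 ≠ 0`, so it determines `β n`. -/
theorem IsCarlitz.unique (hq0 : 0 ≤ q) (hq1 : q ≠ 1) {β β' : ℕ → ℝ} (h : IsCarlitz q β)
    (h' : IsCarlitz q β') : β = β' := by
  funext n
  induction n using Nat.strong_induction_on with
  | _ n ih =>
  rcases n with _ | n
  · exact h.1.trans h'.1.symm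
  have hrec := (h.2 (n + 1) n.succ_pos).trans (h'.2 (n + 1) n.succ_pos).symm
  have hlow : ∑ k ∈ range (n + 1), ((n + 1).choose k : ℝ) * q ^ k * β k =
      ∑ k ∈ range (n + 1), ((n + 1).choose k : ℝ) * q ^ k * β' k :=
    sum_congr rfl fun k hk => by rw [ih k (mem_range.mp hk)]
  rw [sum_range_succ _ (n + 1), sum_range_succ _ (n + 1), hlow] at hrec
  have hne : q ^ (n + 2) - 1 ≠ 0 := sub_ne_zero.mpr (pow_ne_one_of_nonneg hq0 hq1 (by omega))
  have hdiff : (q ^ (n + 2) - 1) * (β (n + 1) - β' (n + 1)) = 0 := by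
    simp only [Nat.choose_self, Nat.cast_one, one_mul] at hrec
    linear_combination hrec
  exact sub_eq_zero.mp ((mul_eq_zero.mp hdiff).resolve_left hne)

theorem carlitzCoeff_pow_mul_geom_sum (hq0 : 0 ≤ q) (hq1 : q ≠ 1) {w : ℕ} (hw : w ≠ 0)
    (i : ℕ) :
    carlitzCoeff (q ^ w) i * ∑ k ∈ range w, (q ^ (i + 1)) ^ k =
      (1 - q ^ w) / (1 - q) * carlitzCoeff q i := by
  have h1 : 1 - q ≠ 0 := sub_ne_zero.mpr hq1.symm
  have h2 : q ^ (i + 1) ≠ 1 := pow_ne_one_of_nonneg hq0 hq1 i.succ_ne_zero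
  have h3 : (q ^ (i + 1)) ^ w ≠ 1 := by
    rw [← pow_mul]; exact pow_ne_one_of_nonneg hq0 hq1 (Nat.mul_ne_zero i.succ_ne_zero hw)
  have h2' : 1 - q ^ (i + 1) ≠ 0 := sub_ne_zero.mpr h2.symm
  have h3' : 1 - (q ^ (i + 1)) ^ w ≠ 0 := sub_ne_zero.mpr h3.symm
  rw [geom_sum_eq h2, carlitzCoeff, carlitzCoeff, pow_right_comm]
  field_simp
  ring

theorem sum_pow_mul_carlitzSum (hq0 : 0 ≤ q) (hq1 : q ≠ 1) {w : ℕ} (hw : w ≠ 0) (m : ℕ)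
    (t : ℝ) :
    ∑ k ∈ range w, q ^ k * carlitzSum (q ^ w) m (t * q ^ k) =
      (1 - q ^ w) / (1 - q) * carlitzSum q m t := by
  simp only [carlitzSum, mul_sum]
  rw [sum_comm]
  refine sum_congr rfl fun i _ => ?_
  calc _ = m.choose i * t ^ i *
          (carlitzCoeff (q ^ w) i * ∑ k ∈ range w, (q ^ (i + 1)) ^ k) := by
        simp only [mul_sum]
        exact sum_congr rfl fun k _ => by ring
    _ = _ := by rw [carlitzCoeff_pow_mul_geom_sum hq0 hq1 hw]; ring
end

theorem qBernoulli_distribution (q : ℝ) (hq0 : 0 < q) (hq1 : q < 1)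
    (β : ℝ → ℕ → ℝ) (hβ : ∀ r : ℝ, 0 < r → r < 1 → IsCarlitz r (β r))
    (w : ℕ) (hw : 0 < w) (m : ℕ) (x : ℝ) :
    qBernoulliPoly q (β q) m ((w : ℝ) * x) =
      (qReal q (w : ℝ)) ^ ((m : ℤ) - 1) *
        ∑ k ∈ Finset.range w,
          q ^ k * qBernoulliPoly (q ^ w) (β (q ^ w)) m (x + (k : ℝ) / (w : ℝ)) := by
  have hw0 : w ≠ 0 := hw.ne'
  have hqw0 : 0 < q ^ w := pow_pos hq0 w
  have hqw1 : q ^ w < 1 := pow_lt_one₀ hq0.le hq1 hw0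
  rw [(hβ q hq0 hq1).unique hq0.le hq1.ne (isCarlitz_carlitzNum hq0.le hq1.ne),
    (hβ _ hqw0 hqw1).unique hqw0.le hqw1.ne (isCarlitz_carlitzNum hqw0.le hqw1.ne),
    qBernoulliPoly_carlitzNum hq0 hq1.ne]
  have hshift (k : ℕ) : (q ^ w) ^ (x + (k : ℝ) / w) = q ^ ((w : ℝ) * x) * q ^ k := by
    rw [← Real.rpow_natCast q w, ← Real.rpow_mul hq0.le, mul_add,
      mul_div_cancel₀ _ (Nat.cast_ne_zero.mpr hw0), Real.rpow_add hq0, Real.rpow_natCast]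
  simp_rw [qBernoulliPoly_carlitzNum hqw0 hqw1.ne, hshift, mul_div_assoc', ← sum_div,
    sum_pow_mul_carlitzSum hq0.le hq1.ne hw0, qReal, Real.rpow_natCast]
  have h1 : 1 - q ≠ 0 := sub_ne_zero.mpr hq1.ne'
  have hw1 : 1 - q ^ w ≠ 0 := sub_ne_zero.mpr hqw1.ne'
  rw [zpow_sub_one₀ (div_ne_zero hw1 h1), zpow_natCast, div_pow]
  field_simp
end

section
/- Equivalence of the two symmetry expressions: for all natural numbers m, positive integers w₁, w₂, real q with 0 < q < 1, and real x, [w₁]_q^{m-1} ∑_{k=0}^{w₁-1} q^{w₂k} β_{m,q^{w₁}}(w₂x + (w₂/w₁)k) = ∑_{l=0}^{m} C(m,l) [w₁]_q^{l-1} [w₂]_q^{m-l} β_{l,q^{w₁}}(w₂x) ∑_{k=0}^{w₁-1} q^{(l+1)w₂k} [k]_{q^{w₂}}^{m-l}. -/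
/-!
Writing `β_{n,r}(x) = ∑ C(n,l) (r^x)^l [x]_r^{n-l} β_l` as a binomial sum in `r^x` and `[x]_r`,
the rule `[x + y]_r = [y]_r + r^y [x]_r` yields the addition theorem
`β_{n,r}(x + y) = ∑ C(n,l) r^{ly} [y]_r^{n-l} β_{l,r}(x)`, for any sequence `β`. Taking
`r = q^{w₁}` and `y = (w₂/w₁) k`, one has `r^y = q^{w₂k}` and `[y]_r = [k]_{q^{w₂}} [w₂]_q / [w₁]_q`,
and exchanging the sums over `k` and `l` gives the identity.
-/

open Finset

section BinomialSum

variable {R : Type*} [CommRing R]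

def binomialSum (β : ℕ → R) (n : ℕ) (a b : R) : R :=
  ∑ l ∈ range (n + 1), (n.choose l : R) * a ^ l * b ^ (n - l) * β l

theorem binomialSum_mul_add (β : ℕ → R) (n : ℕ) (a b c d : R) :
    binomialSum β n (c * a) (b + c * d) =
      ∑ l ∈ range (n + 1), (n.choose l : R) * c ^ l * b ^ (n - l) * binomialSum β l a d := by
  -- Both sides are sums of `f j i` over `j + i ≤ n`; the right side is indexed by `l = j + i`.
  set f : ℕ → ℕ → R := fun j i =>
    (n.choose (j + i) : R) * c ^ (j + i) * b ^ (n - (j + i)) *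
      ((j + i).choose j * a ^ j * d ^ i * β j)
  symm
  calc ∑ l ∈ range (n + 1), (n.choose l : R) * c ^ l * b ^ (n - l) * binomialSum β l a d
      = ∑ l ∈ range (n + 1), ∑ j ∈ range (l + 1), f j (l - j) := by
        refine sum_congr rfl fun l _ => ?_
        rw [binomialSum, mul_sum]
        refine sum_congr rfl fun j hj => ?_
        simp only [f, Nat.add_sub_cancel' (Nat.lt_succ_iff.mp (mem_range.mp hj))]
    _ = ∑ j ∈ range (n + 1), ∑ i ∈ range (n + 1 - j), f j i := sum_range_diag_flip _ f
    _ = binomialSum β n (c * a) (b + c * d) := by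
        rw [binomialSum]
        refine sum_congr rfl fun j hj => ?_
        have hjn : j ≤ n := Nat.lt_succ_iff.mp (mem_range.mp hj)
        rw [add_comm b, add_pow, Nat.sub_add_comm hjn, mul_sum, sum_mul]
        refine sum_congr rfl fun i _ => ?_
        have hchoose :
            (n.choose (j + i) : R) * (j + i).choose j = n.choose j * (n - j).choose i := by
          have := Nat.choose_mul (n := n) (Nat.le_add_right j i)
          rw [Nat.add_sub_cancel_left] at this
          exact_mod_cast congrArg (Nat.cast : ℕ → R) this
        simp only [f, Nat.sub_sub]
        linear_combination (c ^ (j + i) * b ^ (n - (j + i)) * a ^ j * d ^ i * β j) * hchoose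

end BinomialSum

theorem qReal_add {r : ℝ} (hr : 0 < r) (x y : ℝ) :
    qReal r (x + y) = qReal r y + r ^ y * qReal r x := by
  rw [qReal, qReal, qReal, Real.rpow_add hr]
  ring

theorem qBernoulliPoly_eq_binomialSum {r : ℝ} (hr : 0 ≤ r) (β : ℕ → ℝ) (n : ℕ) (x : ℝ) :
    qBernoulliPoly r β n x = binomialSum β n (r ^ x) (qReal r x) := by
  refine sum_congr rfl fun l _ => ?_
  rw [mul_comm (l : ℝ) x, Real.rpow_mul_natCast hr]

theorem qBernoulliPoly_add {r : ℝ} (hr : 0 < r) (β : ℕ → ℝ) (n : ℕ) (x y : ℝ) :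
    qBernoulliPoly r β n (x + y) =
      ∑ l ∈ range (n + 1),
        (n.choose l : ℝ) * r ^ ((l : ℝ) * y) * qReal r y ^ (n - l) * qBernoulliPoly r β l x := by
  rw [qBernoulliPoly_eq_binomialSum hr.le, qReal_add hr, Real.rpow_add hr, mul_comm (r ^ x),
    binomialSum_mul_add]
  refine sum_congr rfl fun l _ => ?_
  rw [qBernoulliPoly_eq_binomialSum hr.le, mul_comm (l : ℝ) y, Real.rpow_mul_natCast hr.le]

theorem qReal_pow_mul_qReal {r : ℝ} (hr : 0 < r) (n : ℕ) (z : ℝ) :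
    qReal (r ^ n) z * qReal r n = qReal r (n * z) := by
  rcases eq_or_ne r 1 with rfl | hr1
  · simp [qReal]
  rcases eq_or_ne n 0 with rfl | hn
  · simp [qReal]
  have hrn : r ^ n ≠ 1 := (pow_eq_one_iff_of_nonneg hr.le hn).not.mpr hr1
  rw [qReal, qReal, qReal, Real.rpow_natCast, Real.rpow_natCast_mul hr.le]
  field_simp [sub_ne_zero.mpr hrn.symm, sub_ne_zero.mpr hr1.symm]

theorem qReal_natCast_ne_zero {r : ℝ} (hr : 0 < r) (hr1 : r ≠ 1) {n : ℕ} (hn : n ≠ 0) :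
    qReal r n ≠ 0 := by
  rw [qReal, Real.rpow_natCast]
  have hrn : r ^ n ≠ 1 := (pow_eq_one_iff_of_nonneg hr.le hn).not.mpr hr1
  exact div_ne_zero (sub_ne_zero.mpr hrn.symm) (sub_ne_zero.mpr hr1.symm)

theorem qReal_pow_div_mul {q : ℝ} (hq : 0 < q) (hq1 : q ≠ 1) {w₁ : ℕ} (hw₁ : w₁ ≠ 0) (w₂ k : ℕ) :
    qReal (q ^ w₁) ((w₂ : ℝ) / w₁ * k) = qReal (q ^ w₂) k * qReal q w₂ / qReal q w₁ := by
  rw [eq_div_iff (qReal_natCast_ne_zero hq hq1 hw₁), qReal_pow_mul_qReal hq,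
    qReal_pow_mul_qReal hq]
  congr 1
  field_simp

theorem pow_rpow_div_mul {q : ℝ} (hq : 0 ≤ q) {w₁ : ℕ} (hw₁ : w₁ ≠ 0) (l w₂ k : ℕ) :
    (q ^ w₁) ^ ((l : ℝ) * ((w₂ : ℝ) / w₁ * k)) = q ^ (l * w₂ * k) := by
  rw [← Real.rpow_natCast_mul hq, ← Real.rpow_natCast]
  congr 1
  push_cast
  field_simp

theorem qBernoulli_symmetry_equiv_general (m : ℕ) (w₁ w₂ : ℕ) (hw₁ : 0 < w₁)
    (q : ℝ) (hq0 : 0 < q) (hq1 : q < 1) (x : ℝ)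
    (β : ℝ → ℕ → ℝ) :
    (qReal q (w₁ : ℝ)) ^ ((m : ℤ) - 1) *
        ∑ k ∈ Finset.range w₁,
          q ^ (w₂ * k) *
            qBernoulliPoly (q ^ w₁) (β (q ^ w₁)) m
              ((w₂ : ℝ) * x + ((w₂ : ℝ) / (w₁ : ℝ)) * (k : ℝ)) =
      ∑ l ∈ Finset.range (m + 1),
        (m.choose l : ℝ) * (qReal q (w₁ : ℝ)) ^ ((l : ℤ) - 1) *
          (qReal q (w₂ : ℝ)) ^ (m - l) *
            qBernoulliPoly (q ^ w₁) (β (q ^ w₁)) l ((w₂ : ℝ) * x) *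
              ∑ k ∈ Finset.range w₁,
                q ^ ((l + 1) * w₂ * k) * (qReal (q ^ w₂) (k : ℝ)) ^ (m - l) := by
  have hA : qReal q w₁ ≠ 0 := qReal_natCast_ne_zero hq0 hq1.ne hw₁.ne'
  simp only [mul_sum]
  rw [sum_comm]
  refine sum_congr rfl fun k _ => ?_
  rw [qBernoulliPoly_add (pow_pos hq0 w₁), mul_sum, mul_sum]
  refine sum_congr rfl fun l hl => ?_
  have hsplit :
      qReal q w₁ ^ ((m : ℤ) - 1) = qReal q w₁ ^ ((l : ℤ) - 1) * qReal q w₁ ^ (m - l) := by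
    rw [← zpow_natCast, ← zpow_add₀ hA, Nat.cast_sub (Nat.lt_succ_iff.mp (mem_range.mp hl))]
    congr 1
    ring
  rw [pow_rpow_div_mul hq0.le hw₁.ne', qReal_pow_div_mul hq0 hq1.ne hw₁.ne', hsplit, div_pow]
  field_simp
  ring

theorem qBernoulli_symmetry_equiv (m : ℕ) (w₁ w₂ : ℕ) (hw₁ : 0 < w₁) (hw₂ : 0 < w₂)
    (q : ℝ) (hq0 : 0 < q) (hq1 : q < 1) (x : ℝ)
    (β : ℝ → ℕ → ℝ) (hβ : ∀ r : ℝ, 0 < r → r < 1 → IsCarlitz r (β r)) :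
    (qReal q (w₁ : ℝ)) ^ ((m : ℤ) - 1) *
        ∑ k ∈ Finset.range w₁,
          q ^ (w₂ * k) *
            qBernoulliPoly (q ^ w₁) (β (q ^ w₁)) m
              ((w₂ : ℝ) * x + ((w₂ : ℝ) / (w₁ : ℝ)) * (k : ℝ)) =
      ∑ l ∈ Finset.range (m + 1),
        (m.choose l : ℝ) * (qReal q (w₁ : ℝ)) ^ ((l : ℤ) - 1) *
          (qReal q (w₂ : ℝ)) ^ (m - l) *
            qBernoulliPoly (q ^ w₁) (β (q ^ w₁)) l ((w₂ : ℝ) * x) *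
              ∑ k ∈ Finset.range w₁,
                q ^ ((l + 1) * w₂ * k) * (qReal (q ^ w₂) (k : ℝ)) ^ (m - l) :=
  qBernoulli_symmetry_equiv_general m w₁ w₂ hw₁ q hq0 hq1 x β
end
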